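/- Let ℐ_pol^q be the ideal of the polynomial algebra ℝ[(s^I)_{I ∈ 𝕀₀^q, I ≠ ∅}] generated by the elements s^{I₁}⋯s^{I_n} − Σ_{I ∈ 𝕀₀^q} ε^{I₁⋯I_n}_I s^I for n ≥ 2 and I₁,…,I_n ∈ 𝕀₂^q. Then the quotient ℝ[(s^I)]/ℐ_pol^q is isomorphic as an ℝ-algebra to the even Grassmann algebra ℝ[η¹,…,η^q]₀, via the map sending s^I to η^I. -/

import Mathlib

/-- Sign `ε^{IJ}` : for disjoint increasing multi-indices `I`, `J`,
the signature of the shuffle reordering the concatenation `IJ`; `0` if not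
disjoint. -/
def gSign {q : ℕ} (I J : Finset (Fin q)) : ℤ :=
  if Disjoint I J then
    (-1 : ℤ) ^ (((I ×ˢ J).filter (fun p => p.2 < p.1)).card)
  else 0

/-- The product of the pairwise shuffle signs of a list of multi-indices. -/
def gSignAux {q : ℕ} : List (Finset (Fin q)) → ℤ
  | [] => 1
  | J :: L => gSign J (L.foldr (· ∪ ·) ∅) * gSignAux L

/-- `ε^{I₁⋯I_n}_I`: the signature of the permutation sorting the
concatenation `I₁⋯I_n` into `I` when the `I_j` are pairwise disjoint with
union `I`, and `0` otherwise. -/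
def epsList {q : ℕ} (L : List (Finset (Fin q))) (I : Finset (Fin q)) : ℤ :=
  if (L.foldr (· ∪ ·) ∅ = I ∧ L.Pairwise Disjoint) then gSignAux L else 0

/-- The Grassmann monomial `η^I`. -/
noncomputable def etaI {q : ℕ} (I : Finset (Fin q)) :
    ExteriorAlgebra ℝ (Fin q → ℝ) :=
  ((I.sort (· ≤ ·)).map (fun i => ExteriorAlgebra.ι ℝ (Pi.single i 1))).prod

/-
The monomials `η^I` are Mathlib's basis of the exterior algebra indexed by finsets, and
`η^J η^K = ε^{JK} η^{J ∪ K}` (move the generators of `J` across `η^K` one at a time). Hence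
`η^{I₁} ⋯ η^{I_n} = Σ_I ε^{I₁⋯I_n}_I η^I`, so `s^I ↦ η^I` kills the relations and, the even part
being commutative, descends to the quotient. It is onto because the even part is generated by
products of two vectors, which are combinations of the `η^{ij}`. It is injective because the
relations with `n = 2` make every class the class of an affine polynomial `c + Σ c_I s^I`, whose
image `c η^∅ + Σ c_I η^I` vanishes only if all coefficients do.
-/

section Signs

variable {q : ℕ}

lemma gSign_empty_left (K : Finset (Fin q)) : gSign ∅ K = 1 := by
  simp [gSign]

lemma gSign_union_left {A B : Finset (Fin q)} (hAB : Disjoint A B) (K : Finset (Fin q)) :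
    gSign (A ∪ B) K = gSign A K * gSign B K := by
  by_cases hA : Disjoint A K
  · by_cases hB : Disjoint B K
    · rw [gSign, gSign, gSign, if_pos (Finset.disjoint_union_left.2 ⟨hA, hB⟩), if_pos hA,
        if_pos hB, Finset.union_product, Finset.filter_union, Finset.card_union_of_disjoint,
        pow_add]
      exact Finset.disjoint_filter_filter (Finset.disjoint_product.2 (Or.inl hAB))
    · simp [gSign, hB, Finset.disjoint_union_left]
  · simp [gSign, hA, Finset.disjoint_union_left]

lemma gSign_singleton_left (a : Fin q) (K : Finset (Fin q)) :
    gSign {a} K = if a ∈ K then 0 else (-1) ^ (K.filter (· < a)).card := by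
  rw [gSign, Finset.singleton_product, Finset.filter_map, Finset.card_map]
  simp only [Finset.disjoint_singleton_left, ite_not]
  rfl

lemma gSign_singleton_insert_of_lt {a m : Fin q} {K : Finset (Fin q)} (hma : m < a)
    (hm : m ∉ K) : gSign {a} (insert m K) = -gSign {a} K := by
  rw [gSign_singleton_left, gSign_singleton_left, Finset.filter_insert, if_pos hma,
    Finset.card_insert_of_notMem (fun h => hm (Finset.mem_of_mem_filter m h)), pow_succ]
  simp only [Finset.mem_insert, hma.ne', false_or]
  split_ifs <;> simp

lemma gSign_singleton_union_of_forall_lt {a : Fin q} {J : Finset (Fin q)}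
    (h : ∀ j ∈ J, a < j) (K : Finset (Fin q)) : gSign {a} (J ∪ K) = gSign {a} K := by
  have hJ : J.filter (· < a) = ∅ := Finset.filter_eq_empty_iff.2 fun j hj => (h j hj).not_gt
  rw [gSign_singleton_left, gSign_singleton_left, Finset.filter_union, hJ, Finset.empty_union]
  have haJ : a ∉ J := fun ha => (h a ha).false
  simp only [Finset.mem_union, haJ, false_or]

end Signs

open ExteriorAlgebra

section Monomials

variable {q : ℕ}

lemma etaI_eq_basis (I : Finset (Fin q)) :
    etaI I = (Pi.basisFun ℝ (Fin q)).ExteriorAlgebra I := by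
  rw [ExteriorAlgebra.basis_apply_ofCard _ rfl, ιMulti_family, ιMulti_apply, List.ofFn_eq_map,
    etaI, ← Finset.listMap_orderEmbOfFin_finRange I rfl, List.map_map]
  simp only [Function.comp_def, Pi.basisFun_apply]
  rfl

lemma linearIndependent_etaI : LinearIndependent ℝ (etaI (q := q)) := by
  simpa only [← funext etaI_eq_basis] using
    (Pi.basisFun ℝ (Fin q)).ExteriorAlgebra.linearIndependent

lemma etaI_empty : etaI (∅ : Finset (Fin q)) = 1 := by
  simp [etaI]

lemma etaI_singleton (a : Fin q) : etaI {a} = ι ℝ (Pi.single a 1) := by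
  simp [etaI]

lemma ι_eq_sum_smul_etaI_singleton (x : Fin q → ℝ) : ι ℝ x = ∑ i, x i • etaI {i} := by
  conv_lhs => rw [← (Pi.basisFun ℝ (Fin q)).sum_repr x]
  simp [etaI_singleton]

lemma etaI_insert_of_forall_lt {a : Fin q} {S : Finset (Fin q)} (h : ∀ j ∈ S, a < j) :
    etaI (insert a S) = etaI {a} * etaI S := by
  rw [etaI, Finset.sort_insert _ (fun j hj => (h j hj).le) (fun ha => (h a ha).false),
    List.map_cons, List.prod_cons, etaI_singleton, etaI]

lemma etaI_singleton_mul_comm (a b : Fin q) : etaI {a} * etaI {b} = -(etaI {b} * etaI {a}) := by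
  rw [etaI_singleton, etaI_singleton]
  exact eq_neg_of_add_eq_zero_left (ι_add_mul_swap _ _)

lemma etaI_singleton_mul (a : Fin q) (S : Finset (Fin q)) :
    etaI {a} * etaI S = (gSign {a} S : ℝ) • etaI (insert a S) := by
  induction S using Finset.induction_on_min with
  | empty => simp [gSign, etaI_empty]
  | insert m S hmS ih =>
    have hm : m ∉ S := fun h => (hmS m h).false
    rcases lt_trichotomy a m with ham | rfl | hma
    · have haS : ∀ j ∈ insert m S, a < j := by
        simpa [ham] using fun j hj => ham.trans (hmS j hj)
      rw [etaI_insert_of_forall_lt haS, gSign_singleton_left, if_neg fun h => (haS a h).false,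
        Finset.filter_eq_empty_iff.2 fun j hj => (haS j hj).not_gt]
      simp
    · rw [etaI_insert_of_forall_lt hmS, ← mul_assoc, etaI_singleton, ι_sq_zero, zero_mul,
        gSign_singleton_left, if_pos (Finset.mem_insert_self _ _)]
      simp
    · have hmaS : ∀ j ∈ insert a S, m < j := by
        simpa [hma] using hmS
      rw [etaI_insert_of_forall_lt hmS, ← mul_assoc, etaI_singleton_mul_comm, neg_mul, mul_assoc,
        ih, mul_smul_comm, ← etaI_insert_of_forall_lt hmaS, Finset.insert_comm,
        gSign_singleton_insert_of_lt hma hm]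
      simp

lemma etaI_mul (J K : Finset (Fin q)) :
    etaI J * etaI K = (gSign J K : ℝ) • etaI (J ∪ K) := by
  induction J using Finset.induction_on_min with
  | empty => simp [gSign_empty_left, etaI_empty]
  | insert a J haJ ih =>
    rw [etaI_insert_of_forall_lt haJ, mul_assoc, ih, mul_smul_comm, etaI_singleton_mul,
      gSign_singleton_union_of_forall_lt haJ, smul_smul, Finset.insert_union,
      Finset.insert_eq a J,
      gSign_union_left (Finset.disjoint_singleton_left.2 fun h => (haJ a h).false)]
    push_cast
    rw [mul_comm]

end Monomials

section Lists

variable {q : ℕ}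

lemma disjoint_foldr_union_iff {J : Finset (Fin q)} {L : List (Finset (Fin q))} :
    Disjoint J (L.foldr (· ∪ ·) ∅) ↔ ∀ K ∈ L, Disjoint J K := by
  induction L with
  | nil => simp
  | cons K L ih => simp [Finset.disjoint_union_right, ih]

lemma gSignAux_eq_zero_of_not_pairwise {L : List (Finset (Fin q))}
    (h : ¬L.Pairwise Disjoint) : gSignAux L = 0 := by
  induction L with
  | nil => exact absurd List.Pairwise.nil h
  | cons J L ih =>
    rw [List.pairwise_cons, not_and_or] at h
    rcases h with h | h
    · rw [gSignAux, gSign, if_neg (mt disjoint_foldr_union_iff.1 h), zero_mul]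
    · rw [gSignAux, ih h, mul_zero]

lemma epsList_eq_ite (L : List (Finset (Fin q))) (I : Finset (Fin q)) :
    epsList L I = if L.foldr (· ∪ ·) ∅ = I then gSignAux L else 0 := by
  by_cases hL : L.Pairwise Disjoint
  · simp [epsList, hL]
  · simp [epsList, hL, gSignAux_eq_zero_of_not_pairwise hL]

lemma even_card_foldr_union {L : List (Finset (Fin q))} (hL : L.Pairwise Disjoint)
    (h : ∀ J ∈ L, Even J.card) : Even (L.foldr (· ∪ ·) ∅).card := by
  induction L with
  | nil => simp
  | cons J L ih =>
    rw [List.pairwise_cons] at hL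
    rw [List.foldr_cons, Finset.card_union_of_disjoint (disjoint_foldr_union_iff.2 hL.1)]
    exact (h J List.mem_cons_self).add (ih hL.2 fun K hK => h K (List.mem_cons_of_mem J hK))

lemma prod_map_etaI (L : List (Finset (Fin q))) :
    (L.map etaI).prod = (gSignAux L : ℝ) • etaI (L.foldr (· ∪ ·) ∅) := by
  induction L with
  | nil => simp [gSignAux, etaI_empty]
  | cons J L ih =>
    rw [List.map_cons, List.prod_cons, ih, mul_smul_comm, etaI_mul, smul_smul, gSignAux,
      List.foldr_cons]
    push_cast
    rw [mul_comm]

abbrev EvenIndex (q : ℕ) := {I : Finset (Fin q) // Even I.card ∧ I.Nonempty}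

lemma prod_map_etaI_eq_sum_epsList {L : List (Finset (Fin q))}
    (hL : ∀ J ∈ L, Even J.card ∧ J.Nonempty) (hne : L ≠ []) :
    (L.map etaI).prod = ∑ I : EvenIndex q, (epsList L I.1 : ℝ) • etaI I.1 := by
  simp_rw [prod_map_etaI, epsList_eq_ite]
  by_cases hp : L.Pairwise Disjoint
  · obtain ⟨J, L', rfl⟩ := List.exists_cons_of_ne_nil hne
    have hU : Even ((J :: L').foldr (· ∪ ·) ∅).card ∧ ((J :: L').foldr (· ∪ ·) ∅).Nonempty :=
      ⟨even_card_foldr_union hp fun K hK => (hL K hK).1,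
        (hL J List.mem_cons_self).2.mono Finset.subset_union_left⟩
    rw [Finset.sum_eq_single_of_mem ⟨_, hU⟩ (Finset.mem_univ _), if_pos rfl]
    intro I _ hI
    rw [if_neg fun h => hI (Subtype.ext h.symm), Int.cast_zero, zero_smul]
  · simp [gSignAux_eq_zero_of_not_pairwise hp]

end Lists

section EvenCommutative

variable {R M : Type*} [CommRing R] [AddCommGroup M] [Module R M]

lemma ExteriorAlgebra.ι_mul_ι_mem_center (a b : M) :
    ι R a * ι R b ∈ Subalgebra.center R (ExteriorAlgebra R M) := by
  have anticomm (x y : M) : ι R x * ι R y = -(ι R y * ι R x) :=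
    eq_neg_of_add_eq_zero_left (ι_add_mul_swap x y)
  rw [Subalgebra.mem_center_iff]
  intro z
  induction z using ExteriorAlgebra.induction with
  | algebraMap r => exact Algebra.commutes r _
  | ι c => rw [← mul_assoc, anticomm c a, neg_mul, mul_assoc, anticomm c b, mul_neg, neg_neg,
      mul_assoc]
  | mul x y hx hy => rw [mul_assoc, hy, ← mul_assoc, hx, mul_assoc]
  | add x y hx hy => rw [add_mul, mul_add, hx, hy]

lemma ExteriorAlgebra.even_le_center :
    CliffordAlgebra.even (0 : QuadraticForm R M) ≤ Subalgebra.center R (ExteriorAlgebra R M) := by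
  intro x hx
  induction x, hx using CliffordAlgebra.even_induction with
  | algebraMap r => exact Subalgebra.algebraMap_mem _ r
  | add x y _ _ hx hy => exact add_mem hx hy
  | ι_mul_ι_mul a b x _ hx => exact mul_mem (ι_mul_ι_mem_center a b) hx

abbrev ExteriorAlgebra.evenCommRing : CommRing (CliffordAlgebra.even (0 : QuadraticForm R M)) :=
  { (inferInstance : Ring (CliffordAlgebra.even (0 : QuadraticForm R M))) with
    mul_comm := fun x y =>
      Subtype.ext (Subalgebra.mem_center_iff.1 (even_le_center x.2) y).symm }

end EvenCommutative

section Quotient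

variable {q : ℕ}

attribute [local instance] ExteriorAlgebra.evenCommRing

open MvPolynomial

lemma etaI_mem_even {I : Finset (Fin q)} (h : Even I.card) :
    etaI I ∈ CliffordAlgebra.even (0 : QuadraticForm ℝ (Fin q → ℝ)) := by
  have hmem := SetLike.list_prod_map_mem_graded
    (A := CliffordAlgebra.evenOdd (0 : QuadraticForm ℝ (Fin q → ℝ)))
    (I.sort (· ≤ ·)) (fun _ => 1) (fun i => ι ℝ (Pi.single i 1))
    (fun i _ => CliffordAlgebra.ι_mem_evenOdd_one _ _)
  rw [List.map_const', List.sum_replicate, Finset.length_sort, nsmul_one,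
    (ZMod.natCast_eq_zero_iff_even).2 h] at hmem
  exact hmem

noncomputable def relationIdeal (q : ℕ) : Ideal (MvPolynomial (EvenIndex q) ℝ) :=
  Ideal.span {P | ∃ (n : ℕ) (T : Fin n → EvenIndex q), 2 ≤ n ∧ P = (∏ i, X (T i)) -
    ∑ I : EvenIndex q, C ((epsList (List.ofFn fun i => (T i).1) I.1 : ℤ) : ℝ) * X I}

noncomputable def toEven (q : ℕ) :
    MvPolynomial (EvenIndex q) ℝ →ₐ[ℝ] CliffordAlgebra.even (0 : QuadraticForm ℝ (Fin q → ℝ)) :=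
  aeval fun I => ⟨etaI I.1, etaI_mem_even I.2.1⟩

lemma coe_toEven_X (I : EvenIndex q) :
    (toEven q (X I) : ExteriorAlgebra ℝ (Fin q → ℝ)) = etaI I.1 := by
  simp [toEven]

lemma relationIdeal_le_ker_toEven : relationIdeal q ≤ RingHom.ker (toEven q) := by
  rw [relationIdeal, Ideal.span_le]
  rintro _ ⟨n, T, hn, rfl⟩
  have hL : ∀ J ∈ List.ofFn (fun i => (T i).1), Even J.card ∧ J.Nonempty := by
    simp only [List.mem_ofFn]
    rintro _ ⟨i, rfl⟩
    exact (T i).2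
  have hne : List.ofFn (fun i => (T i).1) ≠ [] := by
    simp only [ne_eq, List.ofFn_eq_nil_iff]; omega
  rw [SetLike.mem_coe, RingHom.mem_ker, ← Subtype.coe_inj, ← List.prod_ofFn]
  simp only [map_sub, map_list_prod, map_sum, map_mul, algHom_C, List.map_ofFn,
    Subalgebra.coe_sub, SubmonoidClass.coe_list_prod, AddSubmonoidClass.coe_finsetSum,
    ← Algebra.smul_def,
    Subalgebra.coe_smul, Function.comp_def, coe_toEven_X, ZeroMemClass.coe_zero]
  rw [← prod_map_etaI_eq_sum_epsList hL hne, List.map_ofFn, Function.comp_def, sub_self]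

noncomputable def quotientToEven (q : ℕ) :
    (MvPolynomial (EvenIndex q) ℝ ⧸ relationIdeal q) →ₐ[ℝ]
      CliffordAlgebra.even (0 : QuadraticForm ℝ (Fin q → ℝ)) :=
  Ideal.Quotient.liftₐ _ (toEven q) fun _ h => relationIdeal_le_ker_toEven h

lemma coe_quotientToEven_mk_X (I : EvenIndex q) :
    (quotientToEven q (Ideal.Quotient.mk _ (X I)) : ExteriorAlgebra ℝ (Fin q → ℝ)) = etaI I.1 :=
  coe_toEven_X I

lemma ι_mul_ι_mem_span_etaI (a b : Fin q → ℝ) :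
    ι ℝ a * ι ℝ b ∈ Submodule.span ℝ (Set.range fun I : EvenIndex q => etaI I.1) := by
  rw [ι_eq_sum_smul_etaI_singleton a, ι_eq_sum_smul_etaI_singleton b, Finset.sum_mul_sum]
  refine Submodule.sum_mem _ fun i _ => Submodule.sum_mem _ fun j _ => ?_
  rw [smul_mul_smul_comm, etaI_mul]
  refine Submodule.smul_mem _ _ ?_
  rcases eq_or_ne i j with rfl | hij
  · simp [gSign_singleton_left]
  · have hpair : Even ({i} ∪ {j} : Finset (Fin q)).card ∧ ({i} ∪ {j} : Finset (Fin q)).Nonempty :=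
      ⟨by simp [Finset.card_pair hij], by simp⟩
    exact Submodule.smul_mem _ _ (Submodule.subset_span ⟨⟨_, hpair⟩, rfl⟩)

lemma quotientToEven_surjective : Function.Surjective (quotientToEven q) := by
  have hrange : CliffordAlgebra.even (0 : QuadraticForm ℝ (Fin q → ℝ)) ≤
      ((CliffordAlgebra.even 0).val.comp (quotientToEven q)).range := by
    intro x hx
    induction x, hx using CliffordAlgebra.even_induction with
    | algebraMap r => exact Subalgebra.algebraMap_mem _ r
    | add x y _ _ hx hy => exact add_mem hx hy
    | ι_mul_ι_mul a b x _ hx =>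
      have hab : ι ℝ a * ι ℝ b ∈ Subalgebra.toSubmodule
          ((CliffordAlgebra.even 0).val.comp (quotientToEven q)).range := by
        refine Submodule.span_le.2 ?_ (ι_mul_ι_mem_span_etaI a b)
        rintro _ ⟨I, rfl⟩
        exact ⟨_, coe_quotientToEven_mk_X I⟩
      exact mul_mem hab hx
  intro y
  obtain ⟨x, hx⟩ := hrange y.2
  exact ⟨x, Subtype.ext hx⟩

lemma mk_X_mul_mk_X (I J : EvenIndex q) :
    Ideal.Quotient.mk (relationIdeal q) (X I) * Ideal.Quotient.mk _ (X J) =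
      ∑ K : EvenIndex q, (epsList [I.1, J.1] K.1 : ℝ) • Ideal.Quotient.mk _ (X K) := by
  have hrel : X I * X J - ∑ K : EvenIndex q, C (epsList [I.1, J.1] K.1 : ℝ) * X K ∈
      relationIdeal q :=
    Ideal.subset_span ⟨2, ![I, J], le_rfl, by simp [Fin.prod_univ_two]⟩
  rw [← map_mul, Ideal.Quotient.eq.2 hrel, map_sum]
  refine Finset.sum_congr rfl fun K _ => ?_
  rw [map_mul, ← MvPolynomial.algebraMap_eq, Ideal.Quotient.mk_algebraMap, ← Algebra.smul_def]

lemma span_range_mk_X_eq_top :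
    Submodule.span ℝ (Set.range fun o : Option (EvenIndex q) =>
      o.elim 1 fun I => Ideal.Quotient.mk (relationIdeal q) (X I)) = ⊤ := by
  set p := Submodule.span ℝ (Set.range fun o : Option (EvenIndex q) =>
      o.elim 1 fun I => Ideal.Quotient.mk (relationIdeal q) (X I))
  have hX (I : EvenIndex q) : Ideal.Quotient.mk _ (X I) ∈ p :=
    Submodule.subset_span ⟨some I, rfl⟩
  have hmulX (y) (hy : y ∈ p) (I : EvenIndex q) : y * Ideal.Quotient.mk _ (X I) ∈ p := by
    induction hy using Submodule.span_induction with
    | mem x hx =>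
      obtain ⟨_ | J, rfl⟩ := hx
      · simpa using hX I
      · dsimp only [Option.elim_some]
        rw [mk_X_mul_mk_X]
        exact Submodule.sum_mem _ fun K _ => Submodule.smul_mem _ _ (hX K)
    | zero => simp
    | add x y _ _ hx hy => rw [add_mul]; exact add_mem hx hy
    | smul r x _ hx => rw [smul_mul_assoc]; exact Submodule.smul_mem _ r hx
  rw [eq_top_iff]
  rintro y -
  obtain ⟨P, rfl⟩ := Ideal.Quotient.mk_surjective y
  induction P using MvPolynomial.induction_on with
  | C r =>
    rw [← algebraMap_eq, Ideal.Quotient.mk_algebraMap, Algebra.algebraMap_eq_smul_one]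
    exact Submodule.smul_mem _ r (Submodule.subset_span ⟨none, rfl⟩)
  | add P Q hP hQ => rw [map_add]; exact add_mem hP hQ
  | mul_X P I hP => rw [map_mul]; exact hmulX _ hP I

lemma quotientToEven_injective : Function.Injective (quotientToEven q) := by
  have hinj : Function.Injective fun o : Option (EvenIndex q) => o.elim ∅ Subtype.val := by
    rintro (_ | I) (_ | J) h
    · rfl
    · exact absurd h.symm J.2.2.ne_empty
    · exact absurd h I.2.2.ne_empty
    · exact congrArg some (Subtype.ext h)
  have himage : ⇑((CliffordAlgebra.even 0).val.comp (quotientToEven q)).toLinearMap ∘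
      (fun o : Option (EvenIndex q) => o.elim 1 fun I => Ideal.Quotient.mk _ (X I)) =
      etaI ∘ fun o => o.elim ∅ Subtype.val := by
    ext (_ | I)
    · simp [etaI_empty]
    · exact coe_quotientToEven_mk_X I
  refine .of_comp (f := Subtype.val) (LinearMap.injective_of_linearIndependent
    (f := ((CliffordAlgebra.even 0).val.comp (quotientToEven q)).toLinearMap)
    span_range_mk_X_eq_top ?_)
  rw [himage]
  exact linearIndependent_etaI.comp _ hinj

noncomputable def quotientEquivEven (q : ℕ) :
    (MvPolynomial (EvenIndex q) ℝ ⧸ relationIdeal q) ≃ₐ[ℝ]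
      CliffordAlgebra.even (0 : QuadraticForm ℝ (Fin q → ℝ)) :=
  AlgEquiv.ofBijective (quotientToEven q) ⟨quotientToEven_injective, quotientToEven_surjective⟩

end Quotient

/-- the quotient of the polynomial ring on the variables
`s^I` (`I` an increasing multi-index of even positive length) by the ideal
generated by `s^{I₁}⋯s^{I_n} − Σ_I ε^{I₁⋯I_n}_I s^I` (`n ≥ 2`) is isomorphic
as an ℝ-algebra to the even Grassmann algebra, via `s^I ↦ η^I`. -/
theorem polynomial_quotient_iso_even_grassmann (q : ℕ) :
    ∃ e : (MvPolynomial {I : Finset (Fin q) // Even I.card ∧ I.Nonempty} ℝ ⧸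
        Ideal.span {P : MvPolynomial {I : Finset (Fin q) // Even I.card ∧ I.Nonempty} ℝ |
          ∃ (n : ℕ) (T : Fin n → {I : Finset (Fin q) // Even I.card ∧ I.Nonempty}),
            2 ≤ n ∧ P = (∏ i, MvPolynomial.X (T i)) -
              ∑ I : {I : Finset (Fin q) // Even I.card ∧ I.Nonempty},
                MvPolynomial.C
                  ((epsList (List.ofFn fun i => (T i).1) I.1 : ℤ) : ℝ) *
                MvPolynomial.X I}) ≃ₐ[ℝ]
      CliffordAlgebra.even (0 : QuadraticForm ℝ (Fin q → ℝ)),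
      ∀ I : {I : Finset (Fin q) // Even I.card ∧ I.Nonempty},
        ((e (Ideal.Quotient.mk _ (MvPolynomial.X I)) :
          ExteriorAlgebra ℝ (Fin q → ℝ))) = etaI I.1 :=
  ⟨quotientEquivEven q, coe_quotientToEven_mk_X⟩
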